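/- Define on $\mathbb{R}^2$ (with $u > 0$ when $m$ is not an even integer) the functions $A^1 = uv - \tfrac{2c}{\frac{m}{2}+1} u^{\frac{m}{2}+1}$ and $A^2 = \tfrac{1}{2}v^2 + \left(-\tfrac{m}{4m-4}c^2 + \tfrac{m}{m-1}\right) u^m$, where $m > 1$ and $c$ are real parameters. Let $c^i_{jk} = \partial_j\partial_k A^i$. Then the product with structure constants $c^i_{jk}$ is commutative, associative, and has unit $e = \partial_v$ at every point where $u > 0$. -/
import Mathlib


/-- Partial derivative of a function of two real variables. -/
noncomputable def pd (j : Fin 2) (f : ℝ → ℝ → ℝ) : ℝ → ℝ → ℝ :=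
  fun u v => if j = 0 then deriv (fun u' => f u' v) u else deriv (fun v' => f u v') v

/-- The vector potential of the `I₂(m)` family. -/
noncomputable def ApotI (m c : ℝ) : Fin 2 → ℝ → ℝ → ℝ :=
  fun i => if i = 0 then
      (fun u v => u * v - (2 * c / (m / 2 + 1)) * Real.rpow u (m / 2 + 1))
    else
      (fun u v => (1/2) * v ^ 2 + (-(m / (4 * m - 4)) * c ^ 2 + m / (m - 1)) * Real.rpow u m)

/-- Structure constants `c^i_{jk} = ∂_j ∂_k A^i`. -/
noncomputable def cstrI (m c : ℝ) (i j k : Fin 2) : ℝ → ℝ → ℝ := pd j (pd k (ApotI m c i))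

/-- The product with structure constants `cstrI` at the point `(u,v)`. -/
noncomputable def prodI (m c u v : ℝ) (x y : Fin 2 → ℝ) : Fin 2 → ℝ :=
  fun i => ∑ j : Fin 2, ∑ k : Fin 2, cstrI m c i j k u v * x j * y k

lemma pd0_apply (f : ℝ → ℝ → ℝ) (u v : ℝ) : pd 0 f u v = deriv (fun u' => f u' v) u := by
  simp [pd]

lemma pd1_apply (f : ℝ → ℝ → ℝ) (u v : ℝ) : pd 1 f u v = deriv (fun v' => f u v') v := by
  simp [pd]

lemma ApotI0 (m c : ℝ) :
    ApotI m c 0 = fun u v => u * v - (2 * c / (m / 2 + 1)) * Real.rpow u (m / 2 + 1) := by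
  simp [ApotI]

lemma ApotI1 (m c : ℝ) :
    ApotI m c 1 = fun u v =>
      (1/2) * v ^ 2 + (-(m / (4 * m - 4)) * c ^ 2 + m / (m - 1)) * Real.rpow u m := by
  simp [ApotI]

lemma A1_pd1 (m c u v : ℝ) : pd 1 (ApotI m c 0) u v = u := by
  rw [pd1_apply, ApotI0]
  have h := ((hasDerivAt_id v).const_mul u).sub_const
      ((2 * c / (m / 2 + 1)) * Real.rpow u (m / 2 + 1))
  simpa using h.deriv

lemma A2_pd1 (m c u v : ℝ) : pd 1 (ApotI m c 1) u v = v := by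
  rw [pd1_apply, ApotI1]
  have h := ((hasDerivAt_pow 2 v).const_mul (1/2:ℝ)).add_const
      ((-(m / (4 * m - 4)) * c ^ 2 + m / (m - 1)) * Real.rpow u m)
  have := h.deriv
  simpa using this

lemma A1_pd0 (m c : ℝ) (u v : ℝ) (hu : u ≠ 0) :
    pd 0 (ApotI m c 0) u v
      = v - (2 * c / (m / 2 + 1)) * ((m / 2 + 1) * Real.rpow u (m / 2 + 1 - 1)) := by
  rw [pd0_apply, ApotI0]
  have h1 : HasDerivAt (fun u' => u' * v) v u := by
    simpa using (hasDerivAt_id u).mul_const v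
  have h2 := (Real.hasDerivAt_rpow_const (p := m / 2 + 1) (Or.inl hu)).const_mul
      (2 * c / (m / 2 + 1))
  exact (h1.sub h2).deriv

lemma A2_pd0 (m c : ℝ) (u v : ℝ) :
    pd 0 (ApotI m c 1) u v
      = deriv (fun u' => (-(m / (4 * m - 4)) * c ^ 2 + m / (m - 1)) * Real.rpow u' m) u := by
  rw [pd0_apply, ApotI1]
  exact deriv_const_add _

lemma c001 (m c u v : ℝ) : cstrI m c 0 0 1 u v = 1 := by
  unfold cstrI
  rw [pd0_apply]
  have : (fun u' => pd 1 (ApotI m c 0) u' v) = fun u' => u' := by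
    funext u'; exact A1_pd1 m c u' v
  rw [this]; simp

lemma c010 (m c u v : ℝ) (hu : u ≠ 0) : cstrI m c 0 1 0 u v = 1 := by
  unfold cstrI
  rw [pd1_apply]
  have : (fun v' => pd 0 (ApotI m c 0) u v')
      = fun v' => v' - (2 * c / (m / 2 + 1)) * ((m / 2 + 1) * Real.rpow u (m / 2 + 1 - 1)) := by
    funext v'; exact A1_pd0 m c u v' hu
  rw [this]
  simpa using ((hasDerivAt_id v).sub_const
      ((2 * c / (m / 2 + 1)) * ((m / 2 + 1) * Real.rpow u (m / 2 + 1 - 1)))).deriv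

lemma c011 (m c u v : ℝ) : cstrI m c 0 1 1 u v = 0 := by
  unfold cstrI
  rw [pd1_apply]
  have : (fun v' => pd 1 (ApotI m c 0) u v') = fun _ => u := by
    funext v'; exact A1_pd1 m c u v'
  rw [this]; simp

lemma c101 (m c u v : ℝ) : cstrI m c 1 0 1 u v = 0 := by
  unfold cstrI
  rw [pd0_apply]
  have : (fun u' => pd 1 (ApotI m c 1) u' v) = fun _ => v := by
    funext u'; exact A2_pd1 m c u' v
  rw [this]; simp

lemma c110 (m c u v : ℝ) : cstrI m c 1 1 0 u v = 0 := by
  unfold cstrI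
  rw [pd1_apply]
  have : (fun v' => pd 0 (ApotI m c 1) u v')
      = fun _ => deriv (fun u' => (-(m / (4 * m - 4)) * c ^ 2 + m / (m - 1)) * Real.rpow u' m) u := by
    funext v'; exact A2_pd0 m c u v'
  rw [this]; simp

lemma c111 (m c u v : ℝ) : cstrI m c 1 1 1 u v = 1 := by
  unfold cstrI
  rw [pd1_apply]
  have : (fun v' => pd 1 (ApotI m c 1) u v') = fun v' => v' := by
    funext v'; exact A2_pd1 m c u v'
  rw [this]; simp

/-- The product defined by the Hessians of the `I₂(m)` vector potential is
commutative, associative, and has `e = ∂_v` as unit, at every point with `u > 0`. -/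
theorem stmt4 (m c : ℝ) (hm : 1 < m) (u v : ℝ) (hu : 0 < u) :
    (∀ x y : Fin 2 → ℝ, prodI m c u v x y = prodI m c u v y x) ∧
    (∀ x y z : Fin 2 → ℝ,
      prodI m c u v (prodI m c u v x y) z = prodI m c u v x (prodI m c u v y z)) ∧
    (∀ x : Fin 2 → ℝ, prodI m c u v ![0, 1] x = x) := by
  have hu' : u ≠ 0 := ne_of_gt hu
  have h001 := c001 m c u v
  have h010 := c010 m c u v hu'
  have h011 := c011 m c u v
  have h101 := c101 m c u v
  have h110 := c110 m c u v
  have h111 := c111 m c u v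
  refine ⟨?_, ?_, ?_⟩
  · intro x y; funext i; fin_cases i <;>
      simp only [prodI, Fin.sum_univ_two, Fin.mk_zero, Fin.mk_one,
        h001, h010, h011, h101, h110, h111] <;> ring
  · intro x y z; funext i; fin_cases i <;>
      simp only [prodI, Fin.sum_univ_two, Fin.mk_zero, Fin.mk_one,
        h001, h010, h011, h101, h110, h111] <;> ring
  · intro x; funext i; fin_cases i <;>
      simp [prodI, Fin.sum_univ_two, h001, h010, h011, h101, h110, h111]
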